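/- Let Λ be a finite group and let a system of interval-product equations ∏_{k=min B}^{max B} x_k = col(B) (over blocks B ⊆ {1,...,l} with colors in Λ) be solvable. Then the number of solutions in Λ^l equals |Λ|^{c−1}, where c is the number of connected components of the graph on {0,1,...,l} obtained by joining min B − 1 to max B for each block B. -/

import Mathlib

/-- Ordered product `x_{a} x_{a+1} ⋯ x_{b}` of a tuple `x ∈ Λ^l`, where position
`k ∈ {1,…,l}` corresponds to the coordinate `x ⟨k-1⟩`. -/
def intervalProd {Λ : Type*} [Monoid Λ] (l : ℕ) (x : Fin l → Λ) (a b : ℕ) : Λ :=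
  ((List.range' a (b + 1 - a)).map fun k => if h : k - 1 < l then x ⟨k - 1, h⟩ else 1).prod

/-!
Writing `y k = g * x_1 ⋯ x_k` turns a tuple `x` together with a starting value `g` into an
arbitrary function `y` on `{0, …, l}`, and the equation of a block `B` into
`y (max B) = y (min B - 1) * col B`. Multiplying on the right by the inverse of the function `y₀`
of a fixed solution identifies these functions with the functions constant along the edges of the
graph, i.e. with the functions on its set of components. Hence `|solutions| * |Λ| = |Λ| ^ c`.
-/

section PartialProd

variable {Λ : Type*} {l : ℕ}

theorem intervalProd_mul_intervalProd [Monoid Λ] (x : Fin l → Λ) {a b c : ℕ}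
    (hab : a ≤ b + 1) (hbc : b ≤ c) :
    intervalProd l x a b * intervalProd l x (b + 1) c = intervalProd l x a c := by
  unfold intervalProd
  rw [← List.prod_append, ← List.map_append]
  congr 2
  convert List.range'_append_1 (s := a) (m := b + 1 - a) (n := c - b) using 3 <;> omega

theorem intervalProd_succ_succ [Monoid Λ] (x : Fin l → Λ) (k : Fin l) :
    intervalProd l x (k + 1) (k + 1) = x k := by
  simp [intervalProd]

theorem intervalProd_one_eq_partialProd [Monoid Λ] (x : Fin l → Λ) (k : Fin (l + 1)) :
    intervalProd l x 1 k = Fin.partialProd x k := by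
  induction k using Fin.induction with
  | zero => simp [intervalProd]
  | succ k ih =>
    rw [Fin.partialProd_succ, ← ih, ← intervalProd_succ_succ x k, Fin.val_succ,
      Fin.val_castSucc, intervalProd_mul_intervalProd x (by omega) (by omega)]

theorem intervalProd_eq_inv_partialProd_mul [Group Λ] (x : Fin l → Λ) {a b : ℕ}
    (ha : 1 ≤ a) (hab : a ≤ b + 1) (hb : b ≤ l) :
    intervalProd l x a b =
      (Fin.partialProd x ⟨a - 1, by omega⟩)⁻¹ * Fin.partialProd x ⟨b, by omega⟩ := by
  rw [eq_inv_mul_iff_mul_eq, ← intervalProd_one_eq_partialProd, ← intervalProd_one_eq_partialProd]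
  have h := intervalProd_mul_intervalProd x (a := 1) (b := a - 1) (c := b) (by omega) (by omega)
  rwa [Nat.sub_add_cancel ha] at h

@[simps]
def partialProdEquiv (G : Type*) [Group G] (n : ℕ) : (Fin n → G) × G ≃ (Fin (n + 1) → G) where
  toFun p := p.2 • Fin.partialProd p.1
  invFun y := (fun i => (y i.castSucc)⁻¹ * y i.succ, y 0)
  left_inv p := by
    ext i
    · simp [mul_assoc, Fin.partialProd_right_inv]
    · simp [Fin.partialProd_zero]
  right_inv := Fin.partialProd_left_inv

theorem intervalProd_eq_iff [Group Λ] (x : Fin l → Λ) (g c : Λ) {a b : ℕ}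
    (ha : 1 ≤ a) (hab : a ≤ b + 1) (hb : b ≤ l) :
    intervalProd l x a b = c ↔
      partialProdEquiv Λ l (x, g) ⟨b, by omega⟩ =
        partialProdEquiv Λ l (x, g) ⟨a - 1, by omega⟩ * c := by
  simp [intervalProd_eq_inv_partialProd_mul x ha hab hb, mul_assoc, inv_mul_eq_iff_eq_mul]

end PartialProd

section Potential

variable {V ι : Type*} (s t : ι → V)

def edgeRel (a b : V) : Prop := ∃ i, (a = s i ∧ b = t i) ∨ (b = s i ∧ a = t i)

def constOnEdgesEquiv (M : Type*) :
    {z : V → M // ∀ i, z (s i) = z (t i)} ≃ (Quot (edgeRel s t) → M) where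
  toFun z := Quot.lift z.1 <| by
    rintro a b ⟨i, ⟨rfl, rfl⟩ | ⟨rfl, rfl⟩⟩
    exacts [z.2 i, (z.2 i).symm]
  invFun f := ⟨f ∘ Quot.mk _, fun i => congrArg f (Quot.sound ⟨i, .inl ⟨rfl, rfl⟩⟩)⟩
  left_inv _ := rfl
  right_inv f := funext <| Quot.ind fun _ => rfl

variable {Λ : Type*} [Group Λ] {s t}

def potentialShiftEquiv {col : ι → Λ} {y₀ : V → Λ} (hy₀ : ∀ i, y₀ (t i) = y₀ (s i) * col i) :
    {y : V → Λ // ∀ i, y (t i) = y (s i) * col i} ≃ {z : V → Λ // ∀ i, z (s i) = z (t i)} where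
  toFun y := ⟨y.1 * y₀⁻¹, fun i => by simp [y.2 i, hy₀ i, mul_assoc]⟩
  invFun z := ⟨z.1 * y₀, fun i => by simp [z.2 i, hy₀ i, mul_assoc]⟩
  left_inv y := by ext; simp
  right_inv z := by ext; simp

theorem card_potentials [Finite V] {col : ι → Λ} {y₀ : V → Λ}
    (hy₀ : ∀ i, y₀ (t i) = y₀ (s i) * col i) :
    Nat.card {y : V → Λ // ∀ i, y (t i) = y (s i) * col i} =
      Nat.card Λ ^ Nat.card (Quot (edgeRel s t)) := by
  rw [Nat.card_congr ((potentialShiftEquiv hy₀).trans (constOnEdgesEquiv s t Λ)), Nat.card_fun]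

end Potential

theorem stmt6 {Λ : Type*} [Group Λ] [Fintype Λ] (l : ℕ)
    {ι : Type*} (mn mx : ι → ℕ) (col : ι → Λ)
    (hmn : ∀ i, 1 ≤ mn i) (hmm : ∀ i, mn i ≤ mx i) (hmx : ∀ i, mx i ≤ l)
    (hsolv : ∃ x : Fin l → Λ, ∀ i, intervalProd l x (mn i) (mx i) = col i) :
    Nat.card {x : Fin l → Λ // ∀ i, intervalProd l x (mn i) (mx i) = col i} =
      Nat.card Λ ^
        (Nat.card (Quot fun a b : Fin (l + 1) =>
          ∃ i, (a.val = mn i - 1 ∧ b.val = mx i) ∨ (b.val = mn i - 1 ∧ a.val = mx i)) - 1) := by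
  obtain ⟨x₀, hx₀⟩ := hsolv
  let s i : Fin (l + 1) := ⟨mn i - 1, by have := hmm i; have := hmx i; omega⟩
  let t i : Fin (l + 1) := ⟨mx i, Nat.lt_succ_of_le (hmx i)⟩
  have hsol (p : (Fin l → Λ) × Λ) : (∀ i, intervalProd l p.1 (mn i) (mx i) = col i) ↔
      ∀ i, partialProdEquiv Λ l p (t i) = partialProdEquiv Λ l p (s i) * col i :=
    forall_congr' fun i => intervalProd_eq_iff p.1 p.2 _ (hmn i) (by have := hmm i; omega) (hmx i)
  have hcard : Nat.card {x : Fin l → Λ // ∀ i, intervalProd l x (mn i) (mx i) = col i} *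
      Nat.card Λ = Nat.card Λ ^ Nat.card (Quot (edgeRel s t)) := by
    rw [← card_potentials ((hsol (x₀, 1)).1 hx₀), ← Nat.card_prod]
    exact Nat.card_congr (Equiv.prodSubtypeFstEquivSubtypeProd.symm.trans
      ((partialProdEquiv Λ l).subtypeEquiv hsol))
  have hrel : edgeRel s t = fun a b : Fin (l + 1) =>
      ∃ i, (a.val = mn i - 1 ∧ b.val = mx i) ∨ (b.val = mn i - 1 ∧ a.val = mx i) := by
    ext a b
    simp [edgeRel, s, t, Fin.ext_iff]
  rw [← hrel]
  rw [← Nat.sub_add_cancel (Nat.card_pos (α := Quot (edgeRel s t))), pow_succ] at hcard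
  exact Nat.eq_of_mul_eq_mul_right Nat.card_pos hcard
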